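/- In the torus-to-circle reduction, the reduced rank-one operators O^η_{f₁,f₂} v := P(O_{f₁,f₂} i(v)) act on v ∈ C(U(1)) by (O^η_{f₁,f₂} v)(φ) = f₁(φ,0) ∫_{U(1)²} dλ₁ dλ₂ conj(f₂(φ−λ₁ mod 2π, −λ₂ mod 2π)) v(φ−λ₁ mod 2π), which depends only on the restrictions of f₁ to U(1)×{0} and the λ₂-average of f₂; in particular, these operators coincide with Weyl operators of quantum mechanics on the circle applied to the kernel F(φ,λ) = f₁(φ,0)·∫_{U(1)} dλ₂ conj(f₂(φ−λ mod 2π, −λ₂)). -/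
import Mathlib


open MeasureTheory
open scoped Real

instance : Fact (0 < 2 * π) := ⟨by positivity⟩

/-- The circle as `ℝ / 2πℤ`. -/
abbrev Tcirc : Type := AddCircle (2 * π)

/-- The rank-one operators on the torus:
`(O_{f₁,f₂} w)(φ) = f₁(φ) ∫ dλ conj(f₂(φ−λ)) w(φ−λ)`. -/
noncomputable def torusKetBra (f₁ f₂ : C(Tcirc × Tcirc, ℂ)) (w : C(Tcirc × Tcirc, ℂ)) :
    Tcirc × Tcirc → ℂ :=
  fun φ => f₁ φ *
    ∫ l : Tcirc × Tcirc,
      (starRingEnd ℂ) (f₂ (φ.1 - l.1, φ.2 - l.2)) * w (φ.1 - l.1, φ.2 - l.2)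

/-- The inflation `i : C(U(1)) → C(U(1)²)`, `(i v)(φ₁,φ₂) = v(φ₁)`. -/
noncomputable def imap : C(Tcirc, ℂ) → C(Tcirc × Tcirc, ℂ) :=
  fun v => v.comp ⟨fun p => p.1, by fun_prop⟩

/-- The reduced rank-one operators `O^η_{f₁,f₂} v = P (O_{f₁,f₂} (i v))`. -/
noncomputable def reducedKetBra (f₁ f₂ : C(Tcirc × Tcirc, ℂ)) (v : C(Tcirc, ℂ)) :
    Tcirc → ℂ :=
  fun φ => torusKetBra f₁ f₂ (imap v) (φ, 0)

/-- in the torus-to-circle reduction the reduced rank-one operators act by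
`(O^η_{f₁,f₂} v)(φ) = f₁(φ,0) ∫ dλ₁dλ₂ conj(f₂(φ−λ₁, −λ₂)) v(φ−λ₁)`, and they coincide
with circle Weyl operators with kernel `F(φ,λ) = f₁(φ,0) ∫ dλ₂ conj(f₂(φ−λ, −λ₂))`. -/
theorem reducedKetBra_formula (f₁ f₂ : C(Tcirc × Tcirc, ℂ)) (v : C(Tcirc, ℂ)) :
    ∀ φ : Tcirc,
      reducedKetBra f₁ f₂ v φ =
        f₁ (φ, 0) * ∫ l : Tcirc × Tcirc,
          (starRingEnd ℂ) (f₂ (φ - l.1, -l.2)) * v (φ - l.1) ∧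
      reducedKetBra f₁ f₂ v φ =
        ∫ l : Tcirc,
          (f₁ (φ, 0) * ∫ l₂ : Tcirc, (starRingEnd ℂ) (f₂ (φ - l, -l₂))) * v (φ - l) := by
  intro φ
  have h1 : reducedKetBra f₁ f₂ v φ =
      f₁ (φ, 0) * ∫ l : Tcirc × Tcirc,
        (starRingEnd ℂ) (f₂ (φ - l.1, -l.2)) * v (φ - l.1) := by
    simp [reducedKetBra, torusKetBra, imap, zero_sub, ContinuousMap.comp]
  refine ⟨h1, ?_⟩
  rw [h1]
  have hcont : Continuous fun l : Tcirc × Tcirc =>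
      (starRingEnd ℂ) (f₂ (φ - l.1, -l.2)) * v (φ - l.1) := by
    exact (Complex.continuous_conj.comp (f₂.continuous.comp (by fun_prop))).mul
      (v.continuous.comp (by fun_prop))
  have hint : Integrable
      (fun l : Tcirc × Tcirc =>
        (starRingEnd ℂ) (f₂ (φ - l.1, -l.2)) * v (φ - l.1))
      ((volume : Measure Tcirc).prod volume) := by
    rw [← MeasureTheory.Measure.volume_eq_prod Tcirc Tcirc]
    exact hcont.integrable_of_hasCompactSupport (HasCompactSupport.of_compactSpace _)
  rw [MeasureTheory.Measure.volume_eq_prod Tcirc Tcirc, MeasureTheory.integral_prod _ hint]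
  simp only [integral_mul_const]
  rw [← integral_const_mul]
  congr 1
  ext l
  ring
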